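/- Let A be a positive definite real symmetric N×N matrix with eigenvalue bounds α_1, α_2 > 0 (so α_1|v|^2 ≤ ⟨Av,v⟩ ≤ α_2|v|^2), and let a_1,...,a_n ∈ R^N. Fix i ∈ {1,...,n}. Then for all x ∈ R^N: C_1 · exp(-α_2(2n-1)|x-a_i|^2/2) ≤ exp(-∑_{j=1}^n ⟨A(x-a_j), x-a_j⟩/2) ≤ C_2 · exp(-α_1 ((n+1)/2)|x-a_i|^2/2), where C_1 = exp(-α_2 ∑_{j≠i}|a_i-a_j|^2) and C_2 = exp((α_1/2) ∑_{j≠i}|a_i-a_j|^2). -/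
import Mathlib


open Matrix Real

lemma aux_norm_sq (N : ℕ) (v : EuclideanSpace ℝ (Fin N)) :
    ∑ k, v k ^ 2 = ‖v‖ ^ 2 := by
  rw [EuclideanSpace.norm_eq, Real.sq_sqrt (by positivity)]
  simp [Real.norm_eq_abs, sq_abs]

lemma aux_bounds (N : ℕ) (u w : EuclideanSpace ℝ (Fin N)) :
    ‖u‖ ^ 2 / 2 - ‖w‖ ^ 2 ≤ ‖u + w‖ ^ 2 ∧ ‖u + w‖ ^ 2 ≤ 2 * ‖u‖ ^ 2 + 2 * ‖w‖ ^ 2 := by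
  have h := norm_add_sq_real u w
  have h2 := abs_real_inner_le_norm u w
  have h3 := abs_le.mp h2
  constructor <;> nlinarith [norm_nonneg u, norm_nonneg w, sq_nonneg (‖u‖ - ‖w‖), sq_nonneg (‖u‖ - 2*‖w‖)]

/-- Equivalence of the multipolar Gaussian weight with single-pole Gaussian weights. -/
theorem stmt_4 (N n : ℕ) (A : Matrix (Fin N) (Fin N) ℝ) (hAsymm : A.IsSymm) (hApd : A.PosDef)
    (α₁ α₂ : ℝ) (hα₁pos : 0 < α₁) (hα₂pos : 0 < α₂)
    (hα₁ : ∀ v : Fin N → ℝ, α₁ * ∑ k, v k ^ 2 ≤ A.mulVec v ⬝ᵥ v)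
    (hα₂ : ∀ v : Fin N → ℝ, A.mulVec v ⬝ᵥ v ≤ α₂ * ∑ k, v k ^ 2)
    (a : Fin n → EuclideanSpace ℝ (Fin N)) (i : Fin n) (x : EuclideanSpace ℝ (Fin N))
    (C₁ C₂ : ℝ)
    (hC₁ : C₁ = Real.exp (-α₂ * ∑ j ∈ Finset.univ.erase i, ‖a i - a j‖ ^ 2))
    (hC₂ : C₂ = Real.exp ((α₁ / 2) * ∑ j ∈ Finset.univ.erase i, ‖a i - a j‖ ^ 2)) :
    C₁ * Real.exp (-(α₂ * (2 * (n : ℝ) - 1)) * ‖x - a i‖ ^ 2 / 2)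
        ≤ Real.exp (-(∑ j, A.mulVec (fun k => x k - a j k) ⬝ᵥ (fun k => x k - a j k)) / 2) ∧
      Real.exp (-(∑ j, A.mulVec (fun k => x k - a j k) ⬝ᵥ (fun k => x k - a j k)) / 2)
        ≤ C₂ * Real.exp (-(α₁ * ((n : ℝ) + 1) / 2) * ‖x - a i‖ ^ 2 / 2) := by
  set S := ∑ j, A.mulVec (fun k => x k - a j k) ⬝ᵥ (fun k => x k - a j k) with hS
  set T := ∑ j, ‖x - a j‖ ^ 2 with hT
  set D := ∑ j ∈ Finset.univ.erase i, ‖a i - a j‖ ^ 2 with hD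
  set r := ‖x - a i‖ ^ 2 with hr
  have hfun : ∀ j : Fin n, (fun k => x k - a j k) = ((x - a j : EuclideanSpace ℝ (Fin N)) : Fin N → ℝ) := by
    intro j; rfl
  have hsum_eq : ∀ j : Fin n, ∑ k, (x k - a j k) ^ 2 = ‖x - a j‖ ^ 2 := by
    intro j
    have := aux_norm_sq N (x - a j)
    simpa using this
  have hST1 : α₁ * T ≤ S := by
    rw [hT, hS, Finset.mul_sum]
    refine Finset.sum_le_sum fun j _ => ?_
    have := hα₁ (fun k => x k - a j k)
    simpa [hsum_eq j] using this
  have hST2 : S ≤ α₂ * T := by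
    rw [hT, hS, Finset.mul_sum]
    refine Finset.sum_le_sum fun j _ => ?_
    have := hα₂ (fun k => x k - a j k)
    simpa [hsum_eq j] using this
  have hn : 0 < n := i.pos
  have hcard : ((Finset.univ.erase i).card : ℝ) = (n : ℝ) - 1 := by
    rw [Finset.card_erase_of_mem (Finset.mem_univ i), Finset.card_univ, Fintype.card_fin]
    rw [Nat.cast_sub hn]
    simp
  have hTsplit : T = r + ∑ j ∈ Finset.univ.erase i, ‖x - a j‖ ^ 2 := by
    rw [hT, ← Finset.add_sum_erase _ _ (Finset.mem_univ i)]
  have hdecomp : ∀ j : Fin n, (x - a j : EuclideanSpace ℝ (Fin N)) = (x - a i) + (a i - a j) := by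
    intro j; abel
  -- upper bound on T
  have hTle : T ≤ (2 * (n : ℝ) - 1) * r + 2 * D := by
    have h1 : ∑ j ∈ Finset.univ.erase i, ‖x - a j‖ ^ 2
        ≤ ∑ j ∈ Finset.univ.erase i, (2 * r + 2 * ‖a i - a j‖ ^ 2) := by
      refine Finset.sum_le_sum fun j _ => ?_
      rw [hdecomp j]
      exact (aux_bounds N (x - a i) (a i - a j)).2
    rw [Finset.sum_add_distrib, Finset.sum_const, ← Finset.mul_sum, nsmul_eq_mul] at h1
    rw [hTsplit]
    rw [← hD] at h1
    nlinarith [h1, hcard]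
  -- lower bound on T
  have hTge : ((n : ℝ) + 1) / 2 * r - D ≤ T := by
    have h1 : ∑ j ∈ Finset.univ.erase i, (r / 2 - ‖a i - a j‖ ^ 2)
        ≤ ∑ j ∈ Finset.univ.erase i, ‖x - a j‖ ^ 2 := by
      refine Finset.sum_le_sum fun j _ => ?_
      rw [hdecomp j]
      exact (aux_bounds N (x - a i) (a i - a j)).1
    rw [Finset.sum_sub_distrib, Finset.sum_const, nsmul_eq_mul, ← hD] at h1
    rw [hTsplit]
    nlinarith [h1, hcard]
  have hrnn : 0 ≤ r := sq_nonneg _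
  have hDnn : 0 ≤ D := Finset.sum_nonneg fun j _ => sq_nonneg _
  constructor
  · rw [hC₁, ← Real.exp_add, Real.exp_le_exp]
    have : S ≤ α₂ * ((2 * (n : ℝ) - 1) * r + 2 * D) := le_trans hST2 (by nlinarith)
    nlinarith
  · rw [hC₂, ← Real.exp_add, Real.exp_le_exp]
    have : α₁ * (((n : ℝ) + 1) / 2 * r - D) ≤ S := le_trans (by nlinarith) hST1
    nlinarith
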